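/- For the projective inversion X^i = x^ix^j∂_j on ℝⁿ, the difference between the adjoint action on differential operators from λ- to μ-densities (pulled back through normal ordering) and the action L^δ on symbols of degree k, restricted to symbols homogeneous of degree k in p, equals ℓ_{k-1}(λ)·∂_{p_i}, where ℓ_k(λ) = -(k + λ(n+1)) and δ = μ - λ. -/

import Mathlib

open MvPolynomial

noncomputable section

/-- Polynomial symbols: polynomial functions on `T*ℝⁿ`; `Sum.inl` are the `x` variables,
`Sum.inr` the fiber variables `p`. -/
abbrev PolySym (n : ℕ) := MvPolynomial (Fin n ⊕ Fin n) ℝ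

/-- Polynomial functions on `ℝⁿ` (densities are identified with these). -/
abbrev PolyDen (n : ℕ) := MvPolynomial (Fin n) ℝ

/-- Polynomial vector fields on `ℝⁿ`, given by their components. -/
abbrev PolyVF (n : ℕ) := Fin n → PolyDen n

/-- `∂/∂x^i` on symbols. -/
def dxOp (n : ℕ) (i : Fin n) : Module.End ℝ (PolySym n) := (pderiv (Sum.inl i)).toLinearMap

/-- `∂/∂p_i` on symbols. -/
def dpOp (n : ℕ) (i : Fin n) : Module.End ℝ (PolySym n) := (pderiv (Sum.inr i)).toLinearMap

/-- Multiplication by a symbol. -/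
def mulOp (n : ℕ) (q : PolySym n) : Module.End ℝ (PolySym n) := LinearMap.mulLeft ℝ q

/-- The symbol `x^i`. -/
def xVar (n : ℕ) (i : Fin n) : PolySym n := X (Sum.inl i)

/-- The symbol `p_i`. -/
def pVar (n : ℕ) (i : Fin n) : PolySym n := X (Sum.inr i)

/-- A polynomial in `x` viewed as a symbol. -/
def liftX (n : ℕ) (f : PolyDen n) : PolySym n := rename Sum.inl f

/-- Divergence of a vector field. -/
def divVF (n : ℕ) (Xf : PolyVF n) : PolyDen n := ∑ i, pderiv i (Xf i)

/-- Weight function computing the degree in the `p` variables. -/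
def pwt (n : ℕ) : Fin n ⊕ Fin n → ℕ := Sum.elim (fun _ => 0) (fun _ => 1)

/-- Homogeneity of degree `k` in the fiber variables `p`. -/
def IsPHomog (n : ℕ) (P : PolySym n) (k : ℕ) : Prop := IsWeightedHomogeneous (pwt n) P k

/-- The weight-`δ` action `L^δ_X = X^i ∂_{x^i} - p_j (∂_{x^i} X^j) ∂_{p_i} + δ Div(X)` of a
vector field on symbols. -/
def Lop (n : ℕ) (δ : ℝ) (Xf : PolyVF n) : Module.End ℝ (PolySym n) :=
  (∑ i, mulOp n (liftX n (Xf i)) ∘ₗ dxOp n i)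
    - (∑ i, ∑ j, mulOp n (pVar n j * liftX n (pderiv i (Xf j))) ∘ₗ dpOp n i)
    + δ • mulOp n (liftX n (divVF n Xf))

/-- The action `ℓ^λ_X = X + λ Div(X)` of a vector field on `λ`-densities. -/
def ellOp (n : ℕ) (lam : ℝ) (Xf : PolyVF n) : Module.End ℝ (PolyDen n) :=
  (∑ i, LinearMap.mulLeft ℝ (Xf i) ∘ₗ (pderiv i).toLinearMap)
    + lam • LinearMap.mulLeft ℝ (divVF n Xf)

/-- Lie bracket of polynomial vector fields. -/
def bracketVF (n : ℕ) (Xf Yf : PolyVF n) : PolyVF n :=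
  fun i => ∑ j, (Xf j * pderiv j (Yf i) - Yf j * pderiv j (Xf i))
/-- The projective inversion `X^i = x^i x^j ∂_j`. -/
def projVF (n : ℕ) (i : Fin n) : PolyVF n := fun j => X i * X j

/-- The divergence operator `D = ∂_{x^i} ∂_{p_i}` on symbols. -/
def divOp (n : ℕ) : Module.End ℝ (PolySym n) := ∑ i, dxOp n i ∘ₗ dpOp n i

/-- Generators of the projective algebra `sl_{n+1}`: affine vector fields together with the
projective inversions. -/
def projGenSet (n : ℕ) : Set (PolyVF n) :=
  {Xf | ∀ i, (Xf i).totalDegree ≤ 1} ∪ Set.range (projVF n)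
/-- Exponents of the `x`-part of a symbol monomial. -/
def xExp (n : ℕ) (m : (Fin n ⊕ Fin n) →₀ ℕ) : Fin n →₀ ℕ :=
  Finsupp.comapDomain Sum.inl m Sum.inl_injective.injOn

/-- Exponents of the `p`-part of a symbol monomial. -/
def pExp (n : ℕ) (m : (Fin n ⊕ Fin n) →₀ ℕ) : Fin n →₀ ℕ :=
  Finsupp.comapDomain Sum.inr m Sum.inr_injective.injOn

/-- The iterated partial derivative `∂^b f` of a polynomial on `ℝⁿ`. -/
def derivMulti (n : ℕ) (b : Fin n →₀ ℕ) (f : PolyDen n) : PolyDen n :=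
  ∑ c ∈ f.support, (f.coeff c * ∏ i, (Nat.descFactorial (c i) (b i) : ℝ)) • monomial (c - b) 1

/-- Normal ordering: the differential operator associated to a symbol, sending the monomial
`x^a p^b` to the operator `x^a ∂^b`. -/
def Nord (n : ℕ) (P : PolySym n) (f : PolyDen n) : PolyDen n :=
  ∑ m ∈ P.support, P.coeff m • (monomial (xExp n m) 1 * derivMulti n (pExp n m) f)

/-!
Normal ordering turns composition with the generators of the Weyl algebra into operations on
symbols: `x_j ∘ N(P) = N(x_j P)`, `N(P) ∘ ∂_j = N(p_j P)`, and, by the Leibniz rule,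
`N(P) ∘ x_j = N(x_j P + ∂_{p_j} P)` and `∂_j ∘ N(P) = N(p_j P + ∂_{x_j} P)`. For the inversion,
`ℓ^λ_X = x_i x_j ∂_j + λ(n+1) x_i` is built from these generators, so `ℓ^μ_X ∘ N(P)` and
`N(P) ∘ ℓ^λ_X` are normal orderings of explicit symbols. Comparing their difference with
`L^δ_X P` is then a computation with symbols, in which Euler's identity `p_j ∂_{p_j} P = k P`,
and its consequence `p_j ∂_{p_j} ∂_{p_i} P = (k - 1) ∂_{p_i} P`, produce `ℓ_{k-1}(λ) ∂_{p_i} P`.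
-/

theorem Finsupp.induction_on_add_single_one {ι : Type*} {p : (ι →₀ ℕ) → Prop} (b : ι →₀ ℕ)
    (zero : p 0) (add_single : ∀ b i, p b → p (b + Finsupp.single i 1)) : p b := by
  induction b using Finsupp.induction with
  | zero => exact zero
  | single_add j m b _ _ hb =>
    suffices key : ∀ m', p (Finsupp.single j m' + b) from key m
    intro m'
    induction m' with
    | zero => simpa using hb
    | succ m' ih => simpa [Finsupp.single_add, add_right_comm] using add_single _ j ih

theorem Finsupp.natCast_smul_tsub_single_add {ι R M : Type*} [Semiring R] [AddCommMonoid M]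
    [Module R M] (g : (ι →₀ ℕ) → M) (b : ι →₀ ℕ) (j : ι) :
    (b j : R) • g (b - Finsupp.single j 1 + Finsupp.single j 1) = (b j : R) • g b := by
  rcases Nat.eq_zero_or_pos (b j) with h | h
  · simp [h]
  · rw [tsub_add_cancel_of_le (Finsupp.single_le_iff.2 h)]

namespace MvPolynomial

theorem pderiv_pderiv_comm {σ R : Type*} [CommRing R] (u v : σ) (f : MvPolynomial σ R) :
    pderiv u (pderiv v f) = pderiv v (pderiv u f) := by
  classical
  have h : ⁅pderiv u, pderiv v⁆ = (0 : Derivation R (MvPolynomial σ R) (MvPolynomial σ R)) :=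
    derivation_ext fun w => by
      rw [Derivation.commutator_apply, pderiv_X, pderiv_X]
      simp only [Pi.single_apply]
      split_ifs <;> simp
  simpa [Derivation.commutator_apply, sub_eq_zero] using congrArg (· f) h

theorem X_mul_monomial {σ R : Type*} [CommSemiring R] (u : σ) (m : σ →₀ ℕ) (r : R) :
    X u * monomial m r = monomial (Finsupp.single u 1 + m) r := by
  rw [monomial_single_add, pow_one]

end MvPolynomial

section DerivMulti

variable {n : ℕ}

theorem derivMulti_eq_constr (b : Fin n →₀ ℕ) (f : PolyDen n) :
    derivMulti n b f = (basisMonomials (Fin n) ℝ).constr ℝ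
      (fun c => (∏ i, ((c i).descFactorial (b i) : ℝ)) • (monomial (c - b) 1 : PolyDen n)) f := by
  simp only [derivMulti, Module.Basis.constr_apply, Finsupp.sum, mul_smul]
  rfl

theorem derivMulti_add (b : Fin n →₀ ℕ) (f g : PolyDen n) :
    derivMulti n b (f + g) = derivMulti n b f + derivMulti n b g := by
  simp only [derivMulti_eq_constr, map_add]

theorem derivMulti_smul (b : Fin n →₀ ℕ) (a : ℝ) (f : PolyDen n) :
    derivMulti n b (a • f) = a • derivMulti n b f := by
  simp only [derivMulti_eq_constr, map_smul]

theorem derivMulti_monomial (b c : Fin n →₀ ℕ) (r : ℝ) :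
    derivMulti n b (monomial c r)
      = (∏ i, ((c i).descFactorial (b i) : ℝ)) • monomial (c - b) r := by
  have h := (basisMonomials (Fin n) ℝ).constr_basis ℝ
    (fun c => (∏ i, ((c i).descFactorial (b i) : ℝ)) • (monomial (c - b) 1 : PolyDen n)) c
  rw [coe_basisMonomials] at h
  rw [← mul_one r, ← smul_eq_mul, ← smul_monomial, derivMulti_eq_constr, map_smul, h,
    smul_comm, smul_monomial]

theorem derivMulti_zero (f : PolyDen n) : derivMulti n 0 f = f := by
  induction f using MvPolynomial.induction_on' with
  | monomial c r => simp [derivMulti_monomial]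
  | add f g hf hg => rw [derivMulti_add, hf, hg]

theorem derivMulti_single_one (j : Fin n) (f : PolyDen n) :
    derivMulti n (Finsupp.single j 1) f = pderiv j f := by
  induction f using MvPolynomial.induction_on' with
  | monomial c r =>
    rw [derivMulti_monomial, pderiv_monomial, smul_monomial, smul_eq_mul, mul_comm,
      Finset.prod_eq_single j (fun i _ hij => by simp [Finsupp.single_eq_of_ne hij]) (by simp)]
    simp
  | add f g hf hg => rw [derivMulti_add, hf, hg, map_add]

theorem derivMulti_add_index (a b : Fin n →₀ ℕ) (f : PolyDen n) :
    derivMulti n (a + b) f = derivMulti n a (derivMulti n b f) := by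
  induction f using MvPolynomial.induction_on' with
  | monomial c r =>
    have hprod : ∏ i, ((c i).descFactorial (a i + b i) : ℝ)
        = (∏ i, ((c i).descFactorial (b i) : ℝ)) * ∏ i, ((c i - b i).descFactorial (a i) : ℝ) := by
      rw [← Finset.prod_mul_distrib]
      refine Finset.prod_congr rfl fun i _ => ?_
      rw [← Nat.descFactorial_mul_descFactorial (Nat.le_add_left (b i) (a i)), Nat.add_sub_cancel,
        mul_comm]
      push_cast; rfl
    rw [derivMulti_monomial, derivMulti_monomial, derivMulti_smul, derivMulti_monomial, smul_smul]
    simp only [Finsupp.coe_add, Pi.add_apply, Finsupp.coe_tsub, Pi.sub_apply, hprod, tsub_tsub,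
      add_comm b a]
  | add f g hf hg => rw [derivMulti_add, hf, hg, derivMulti_add, derivMulti_add]

theorem derivMulti_add_single_one (b : Fin n →₀ ℕ) (j : Fin n) (f : PolyDen n) :
    derivMulti n (b + Finsupp.single j 1) f = derivMulti n b (pderiv j f) := by
  rw [derivMulti_add_index, derivMulti_single_one]

theorem pderiv_derivMulti (b : Fin n →₀ ℕ) (j : Fin n) (f : PolyDen n) :
    pderiv j (derivMulti n b f) = derivMulti n (b + Finsupp.single j 1) f := by
  rw [add_comm, derivMulti_add_index, derivMulti_single_one]

theorem derivMulti_X_mul (b : Fin n →₀ ℕ) (j : Fin n) (f : PolyDen n) :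
    derivMulti n b (X j * f)
      = X j * derivMulti n b f + (b j : ℝ) • derivMulti n (b - Finsupp.single j 1) f := by
  induction b using Finsupp.induction_on_add_single_one generalizing f with
  | zero => simp [derivMulti_zero]
  | add_single b l ih =>
    rw [derivMulti_add_single_one, pderiv_mul]
    rcases eq_or_ne j l with rfl | hjl
    · rw [pderiv_X_self, one_mul, derivMulti_add, ih, derivMulti_add_single_one,
        ← derivMulti_add_single_one (b - Finsupp.single j 1),
        Finsupp.natCast_smul_tsub_single_add (fun b => derivMulti n b f), add_tsub_cancel_right]
      simp only [Finsupp.coe_add, Pi.add_apply, Finsupp.single_eq_same]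
      push_cast
      module
    · have hsub : b + Finsupp.single l 1 - Finsupp.single j 1
          = b - Finsupp.single j 1 + Finsupp.single l 1 := by
        ext a
        simp only [Finsupp.coe_add, Finsupp.coe_tsub, Pi.add_apply, Pi.sub_apply,
          Finsupp.single_apply]
        split_ifs <;> omega
      rw [pderiv_X_of_ne hjl, zero_mul, zero_add, ih, derivMulti_add_single_one, hsub,
        derivMulti_add_single_one]
      simp [Finsupp.single_eq_of_ne hjl]

end DerivMulti

section Nord

variable {n : ℕ}

@[simp] theorem xExp_apply (m : (Fin n ⊕ Fin n) →₀ ℕ) (j : Fin n) :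
    xExp n m j = m (Sum.inl j) := rfl

@[simp] theorem pExp_apply (m : (Fin n ⊕ Fin n) →₀ ℕ) (j : Fin n) :
    pExp n m j = m (Sum.inr j) := rfl

theorem xExp_single_inl_add (j : Fin n) (m : (Fin n ⊕ Fin n) →₀ ℕ) :
    xExp n (Finsupp.single (Sum.inl j) 1 + m) = Finsupp.single j 1 + xExp n m := by
  ext a; simp [Finsupp.single_apply]

theorem pExp_single_inl_add (j : Fin n) (m : (Fin n ⊕ Fin n) →₀ ℕ) :
    pExp n (Finsupp.single (Sum.inl j) 1 + m) = pExp n m := by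
  ext a; simp

theorem xExp_single_inr_add (j : Fin n) (m : (Fin n ⊕ Fin n) →₀ ℕ) :
    xExp n (Finsupp.single (Sum.inr j) 1 + m) = xExp n m := by
  ext a; simp

theorem pExp_single_inr_add (j : Fin n) (m : (Fin n ⊕ Fin n) →₀ ℕ) :
    pExp n (Finsupp.single (Sum.inr j) 1 + m) = Finsupp.single j 1 + pExp n m := by
  ext a; simp [Finsupp.single_apply]

theorem xExp_tsub_single_inl (j : Fin n) (m : (Fin n ⊕ Fin n) →₀ ℕ) :
    xExp n (m - Finsupp.single (Sum.inl j) 1) = xExp n m - Finsupp.single j 1 := by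
  ext a; simp [Finsupp.single_apply]

theorem pExp_tsub_single_inl (j : Fin n) (m : (Fin n ⊕ Fin n) →₀ ℕ) :
    pExp n (m - Finsupp.single (Sum.inl j) 1) = pExp n m := by
  ext a; simp

theorem xExp_tsub_single_inr (j : Fin n) (m : (Fin n ⊕ Fin n) →₀ ℕ) :
    xExp n (m - Finsupp.single (Sum.inr j) 1) = xExp n m := by
  ext a; simp

theorem pExp_tsub_single_inr (j : Fin n) (m : (Fin n ⊕ Fin n) →₀ ℕ) :
    pExp n (m - Finsupp.single (Sum.inr j) 1) = pExp n m - Finsupp.single j 1 := by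
  ext a; simp [Finsupp.single_apply]

theorem dxOp_apply (j : Fin n) (P : PolySym n) : dxOp n j P = pderiv (Sum.inl j) P := rfl

theorem dpOp_apply (j : Fin n) (P : PolySym n) : dpOp n j P = pderiv (Sum.inr j) P := rfl

theorem Nord_eq_constr (P : PolySym n) (f : PolyDen n) :
    Nord n P f = (basisMonomials _ ℝ).constr ℝ
      (fun m => monomial (xExp n m) 1 * derivMulti n (pExp n m) f) P := by
  simp only [Nord, Module.Basis.constr_apply]
  rfl

theorem Nord_monomial (m : (Fin n ⊕ Fin n) →₀ ℕ) (r : ℝ) (f : PolyDen n) :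
    Nord n (monomial m r) f = r • (monomial (xExp n m) 1 * derivMulti n (pExp n m) f) := by
  have h := (basisMonomials _ ℝ).constr_basis ℝ
    (fun m => monomial (xExp n m) 1 * derivMulti n (pExp n m) f) m
  rw [coe_basisMonomials] at h
  rw [← mul_one r, ← smul_eq_mul, ← smul_monomial, Nord_eq_constr, map_smul, h, smul_eq_mul,
    mul_one]

theorem Nord_add_left (P Q : PolySym n) (f : PolyDen n) :
    Nord n (P + Q) f = Nord n P f + Nord n Q f := by
  simp only [Nord_eq_constr, map_add]

theorem Nord_sub_left (P Q : PolySym n) (f : PolyDen n) :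
    Nord n (P - Q) f = Nord n P f - Nord n Q f := by
  simp only [Nord_eq_constr, map_sub]

theorem Nord_smul_left (a : ℝ) (P : PolySym n) (f : PolyDen n) :
    Nord n (a • P) f = a • Nord n P f := by
  simp only [Nord_eq_constr, map_smul]

theorem Nord_sum_left {ι : Type*} (s : Finset ι) (P : ι → PolySym n) (f : PolyDen n) :
    Nord n (∑ a ∈ s, P a) f = ∑ a ∈ s, Nord n (P a) f := by
  simp only [Nord_eq_constr, map_sum]

theorem Nord_add_right (P : PolySym n) (f g : PolyDen n) :
    Nord n P (f + g) = Nord n P f + Nord n P g := by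
  simp only [Nord, derivMulti_add, mul_add, smul_add, Finset.sum_add_distrib]

theorem Nord_smul_right (P : PolySym n) (a : ℝ) (f : PolyDen n) :
    Nord n P (a • f) = a • Nord n P f := by
  simp only [Nord, derivMulti_smul, mul_smul_comm, Finset.smul_sum, smul_comm a]

theorem Nord_sum_right {ι : Type*} (P : PolySym n) (s : Finset ι) (f : ι → PolyDen n) :
    Nord n P (∑ a ∈ s, f a) = ∑ a ∈ s, Nord n P (f a) :=
  map_sum (AddMonoidHom.mk' (Nord n P) (Nord_add_right P)) f s

theorem Nord_xVar_mul (j : Fin n) (P : PolySym n) (f : PolyDen n) :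
    Nord n (xVar n j * P) f = X j * Nord n P f := by
  induction P using MvPolynomial.induction_on' with
  | monomial m r =>
    rw [xVar, X_mul_monomial, Nord_monomial, Nord_monomial, xExp_single_inl_add,
      pExp_single_inl_add, ← X_mul_monomial, mul_smul_comm, mul_assoc]
  | add P Q hP hQ => rw [mul_add, Nord_add_left, Nord_add_left, hP, hQ, mul_add]

theorem Nord_pderiv (j : Fin n) (P : PolySym n) (f : PolyDen n) :
    Nord n P (pderiv j f) = Nord n (pVar n j * P) f := by
  induction P using MvPolynomial.induction_on' with
  | monomial m r =>
    rw [pVar, X_mul_monomial, Nord_monomial, Nord_monomial, xExp_single_inr_add,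
      pExp_single_inr_add, add_comm, derivMulti_add_single_one]
  | add P Q hP hQ => rw [mul_add, Nord_add_left, Nord_add_left, hP, hQ]

theorem Nord_X_mul (j : Fin n) (P : PolySym n) (f : PolyDen n) :
    Nord n P (X j * f) = Nord n (xVar n j * P + dpOp n j P) f := by
  induction P using MvPolynomial.induction_on' with
  | monomial m r =>
    rw [Nord_add_left, Nord_xVar_mul, dpOp_apply, pderiv_monomial,
      Nord_monomial, Nord_monomial, Nord_monomial, derivMulti_X_mul, xExp_tsub_single_inr,
      pExp_tsub_single_inr]
    simp only [pExp_apply]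
    rw [mul_add, smul_add, mul_smul_comm, mul_smul_comm, smul_smul, mul_left_comm]
  | add P Q hP hQ =>
    rw [Nord_add_left, Nord_add_left, hP, hQ, mul_add, map_add, Nord_add_left, Nord_add_left,
      Nord_add_left, Nord_add_left]
    abel

theorem pderiv_Nord (j : Fin n) (P : PolySym n) (f : PolyDen n) :
    pderiv j (Nord n P f) = Nord n (pVar n j * P + dxOp n j P) f := by
  induction P using MvPolynomial.induction_on' with
  | monomial m r =>
    rw [Nord_add_left, pVar, X_mul_monomial, dxOp_apply, pderiv_monomial,
      Nord_monomial, Nord_monomial, Nord_monomial, xExp_single_inr_add, pExp_single_inr_add,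
      xExp_tsub_single_inl, pExp_tsub_single_inl, Derivation.map_smul, pderiv_mul, pderiv_monomial,
      pderiv_derivMulti, add_comm (Finsupp.single j 1)]
    have hmono : (monomial (xExp n m - Finsupp.single j 1) (1 * (xExp n m j : ℝ)) : PolyDen n)
        = (m (Sum.inl j) : ℝ) • monomial (xExp n m - Finsupp.single j 1) 1 := by
      rw [smul_monomial, smul_eq_mul, mul_one, one_mul, xExp_apply]
    rw [hmono, smul_mul_assoc]
    module
  | add P Q hP hQ =>
    rw [Nord_add_left, Nord_add_left, map_add, hP, hQ, mul_add, map_add, Nord_add_left,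
      Nord_add_left, Nord_add_left, Nord_add_left]
    abel

end Nord

section Euler

variable {n : ℕ}

theorem dpOp_xVar_mul (j l : Fin n) (P : PolySym n) :
    dpOp n j (xVar n l * P) = xVar n l * dpOp n j P := by
  rw [dpOp_apply, xVar, pderiv_mul, pderiv_X_of_ne Sum.inl_ne_inr, zero_mul, zero_add, dpOp_apply]

theorem sum_pVar_mul_dpOp_of_isPHomog {P : PolySym n} {k : ℕ} (hP : IsPHomog n P k) :
    ∑ j, pVar n j * dpOp n j P = (k : ℝ) • P := by
  have h := IsWeightedHomogeneous.sum_weight_X_mul_pderiv hP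
  simp only [Fintype.sum_sum_type, pwt, Sum.elim_inl, Sum.elim_inr, zero_smul,
    Finset.sum_const_zero, zero_add, one_smul] at h
  rw [Nat.cast_smul_eq_nsmul, ← h]
  rfl

theorem dpOp_sum_pVar_mul_dpOp (i : Fin n) (P : PolySym n) :
    dpOp n i (∑ j, pVar n j * dpOp n j P)
      = dpOp n i P + ∑ j, pVar n j * dpOp n j (dpOp n i P) := by
  classical
  simp only [map_sum, dpOp_apply, pVar, pderiv_mul, pderiv_X, Finset.sum_add_distrib,
    pderiv_pderiv_comm (Sum.inr i)]
  congr 1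
  simp [Pi.single_apply]

theorem sum_pVar_mul_dpOp_dpOp_of_isPHomog {P : PolySym n} {k : ℕ} (hP : IsPHomog n P k)
    (i : Fin n) :
    ∑ j, pVar n j * dpOp n j (dpOp n i P) = ((k : ℝ) - 1) • dpOp n i P := by
  have h := dpOp_sum_pVar_mul_dpOp i P
  rw [sum_pVar_mul_dpOp_of_isPHomog hP, map_smul] at h
  rw [sub_smul, one_smul, h, add_sub_cancel_left]

end Euler

section ProjectiveInversion

variable {n : ℕ}

theorem divVF_projVF (i : Fin n) : divVF n (projVF n i) = ((n : ℝ) + 1) • (X i : PolyDen n) := by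
  classical
  simp only [divVF, projVF, pderiv_mul, pderiv_X, Pi.single_apply, Finset.sum_add_distrib]
  simp [add_smul, add_comm, Nat.cast_smul_eq_nsmul, nsmul_eq_mul]

theorem ellOp_projVF_apply (lam : ℝ) (i : Fin n) (g : PolyDen n) :
    ellOp n lam (projVF n i) g
      = ∑ j, X i * (X j * pderiv j g) + (lam * ((n : ℝ) + 1)) • (X i * g) := by
  simp [ellOp, divVF_projVF, projVF, smul_smul]

theorem Lop_projVF_apply (δ : ℝ) (i : Fin n) (P : PolySym n) :
    Lop n δ (projVF n i) P
      = ∑ j, xVar n i * (xVar n j * dxOp n j P) - (∑ j, pVar n j * xVar n j) * dpOp n i P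
        - xVar n i * ∑ j, pVar n j * dpOp n j P + (δ * ((n : ℝ) + 1)) • (xVar n i * P) := by
  classical
  simp only [Lop, mulOp, liftX, projVF, map_mul, rename_X, Derivation.leibniz, pderiv_X,
    Pi.single_apply, smul_eq_mul, mul_ite, mul_one, mul_zero, map_add, apply_ite (rename _),
    rename_zero, mul_add, divVF_projVF, map_smul, LinearMap.add_apply, LinearMap.sub_apply,
    LinearMap.coe_sum, LinearMap.coe_comp, Finset.sum_apply, Function.comp_apply,
    LinearMap.mulLeft_apply, add_mul, ite_mul, zero_mul, Finset.sum_add_distrib,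
    Finset.sum_ite_eq', Finset.mem_univ, ↓reduceIte, Finset.sum_ite_irrel, Finset.sum_const_zero,
    Finset.sum_ite_eq, LinearMap.smul_apply, Algebra.smul_mul_assoc, smul_smul, xVar,
    Finset.sum_mul, Finset.mul_sum, add_left_inj]
  simp only [mul_comm (pVar n _) (X (Sum.inl i)), mul_assoc]
  abel

theorem ellOp_projVF_Nord (μ : ℝ) (i : Fin n) (P : PolySym n) (f : PolyDen n) :
    ellOp n μ (projVF n i) (Nord n P f)
      = Nord n (∑ j, xVar n i * (xVar n j * (pVar n j * P + dxOp n j P))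
          + (μ * ((n : ℝ) + 1)) • (xVar n i * P)) f := by
  rw [ellOp_projVF_apply, Nord_add_left, Nord_smul_left, Nord_sum_left, Nord_xVar_mul]
  simp only [pderiv_Nord, Nord_xVar_mul]

theorem Nord_ellOp_projVF (lam : ℝ) (i : Fin n) (P : PolySym n) (f : PolyDen n) :
    Nord n P (ellOp n lam (projVF n i) f)
      = Nord n (∑ j, pVar n j * (xVar n j * (xVar n i * P + dpOp n i P)
            + dpOp n j (xVar n i * P + dpOp n i P))
          + (lam * ((n : ℝ) + 1)) • (xVar n i * P + dpOp n i P)) f := by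
  simp only [ellOp_projVF_apply, Nord_add_right, Nord_sum_right, Nord_smul_right, Nord_X_mul,
    Nord_pderiv, Nord_add_left, Nord_smul_left, Nord_sum_left]

theorem Lop_projVF_add_smul_dpOp_of_isPHomog {P : PolySym n} {k : ℕ} (hP : IsPHomog n P k)
    (i : Fin n) (lam δ : ℝ) :
    Lop n δ (projVF n i) P + (-(((k : ℝ) - 1) + lam * ((n : ℝ) + 1))) • dpOp n i P
      = (∑ j, xVar n i * (xVar n j * (pVar n j * P + dxOp n j P))
          + ((lam + δ) * ((n : ℝ) + 1)) • (xVar n i * P))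
        - (∑ j, pVar n j * (xVar n j * (xVar n i * P + dpOp n i P)
            + dpOp n j (xVar n i * P + dpOp n i P))
          + (lam * ((n : ℝ) + 1)) • (xVar n i * P + dpOp n i P)) := by
  have hleft : ∑ j, xVar n i * (xVar n j * (pVar n j * P + dxOp n j P))
      = (∑ j, pVar n j * xVar n j) * (xVar n i * P) + ∑ j, xVar n i * (xVar n j * dxOp n j P) := by
    rw [Finset.sum_mul, ← Finset.sum_add_distrib]
    exact Finset.sum_congr rfl fun j _ => by ring
  have hright : ∑ j, pVar n j * (xVar n j * (xVar n i * P + dpOp n i P)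
        + dpOp n j (xVar n i * P + dpOp n i P))
      = (∑ j, pVar n j * xVar n j) * (xVar n i * P) + (∑ j, pVar n j * xVar n j) * dpOp n i P
        + xVar n i * ∑ j, pVar n j * dpOp n j P + ∑ j, pVar n j * dpOp n j (dpOp n i P) := by
    rw [Finset.sum_mul, Finset.sum_mul, Finset.mul_sum, ← Finset.sum_add_distrib,
      ← Finset.sum_add_distrib, ← Finset.sum_add_distrib]
    refine Finset.sum_congr rfl fun j _ => ?_
    rw [map_add, dpOp_xVar_mul]
    ring
  rw [Lop_projVF_apply, hleft, hright, sum_pVar_mul_dpOp_of_isPHomog hP,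
    sum_pVar_mul_dpOp_dpOp_of_isPHomog hP, mul_smul_comm]
  module

end ProjectiveInversion

/-- For the projective inversion `X^i = x^ix^j∂_j`, the difference between the
adjoint action on differential operators from `λ`- to `μ`-densities (pulled back through the
normal ordering `N`) and the action `L^δ` on symbols of degree `k` equals
`ℓ_{k-1}(λ)·∂_{p_i}` with `ℓ_k(λ) = -(k + λ(n+1))` and `δ = μ - λ`; equivalently, for every
symbol `P` homogeneous of degree `k` in `p` and every function `f`,
`N(L^δ_X P + ℓ_{k-1}(λ) ∂_{p_i} P) f = ℓ^μ_X (N P f) - N P (ℓ^λ_X f)`. -/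
theorem projective_adjoint_minus_symbol_action (n k : ℕ) (i : Fin n) (lam δ : ℝ)
    (P : PolySym n) (hP : IsPHomog n P k) (f : PolyDen n) :
    Nord n (Lop n δ (projVF n i) P
        + (-(((k : ℝ) - 1) + lam * ((n : ℝ) + 1))) • dpOp n i P) f
      = ellOp n (lam + δ) (projVF n i) (Nord n P f)
        - Nord n P (ellOp n lam (projVF n i) f) := by
  rw [ellOp_projVF_Nord, Nord_ellOp_projVF, ← Nord_sub_left,
    Lop_projVF_add_smul_dpOp_of_isPHomog hP]
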